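/- Let α: ℝ³ → M₄(ℝ) be given by α(x₁,x₂,x₃) = the matrix with rows (0,x₁,0,0), (x₁,0,0,0), (x₂,−x₂,−x₁,0), (x₃,x₃,−x₁,x₁), and let κ(x,y) = 2(x₁y₂−x₂y₁)E₄₂. Define S⁰ = {v ∈ ℝ⁴ : κ(x,y)v = 0 for all x,y} and inductively Sᵏ = {v ∈ Sᵏ⁻¹ : α(x)v ∈ Sᵏ⁻¹ for all x}. Then S⁰ = {(v₁,0,v₃,v₄)}, and S¹ = Sᵏ = {(0,0,v₃,v₄) : v₃,v₄ ∈ ℝ} for all k ≥ 1. -/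

import Mathlib

open Matrix

noncomputable section

/-- The extension α of the invariant projective structure on the Heisenberg group. -/
def αH (x : Fin 3 → ℝ) : Matrix (Fin 4) (Fin 4) ℝ :=
  !![0, x 0, 0, 0;
     x 0, 0, 0, 0;
     x 1, -(x 1), -(x 0), 0;
     x 2, x 2, -(x 0), x 0]

/-- Its curvature κ(x,y) = 2(x₁y₂ − x₂y₁)E₄₂. -/
def κH (x y : Fin 3 → ℝ) : Matrix (Fin 4) (Fin 4) ℝ :=
  (2 * (x 0 * y 1 - x 1 * y 0)) • Matrix.single (3 : Fin 4) (1 : Fin 4) (1 : ℝ)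

/-- The sets S⁰ ⊇ S¹ ⊇ S² ⊇ ⋯ computing the solution space. -/
def S14 : ℕ → Set (Fin 4 → ℝ)
  | 0 => {v | ∀ x y : Fin 3 → ℝ, (κH x y).mulVec v = 0}
  | (k + 1) => {v | v ∈ S14 k ∧ ∀ x : Fin 3 → ℝ, (αH x).mulVec v ∈ S14 k}

/-!
κ(x, y) only reads the second coordinate, so S⁰ is cut out by v₂ = 0. The second entry of
α(x)v is x₁v₁, which forces v₁ = 0 in S¹. The first two entries of α(x)v vanish when v₁ = v₂ = 0,
so S² = S¹, and since each Sᵏ⁺¹ is determined by Sᵏ the sequence is constant from there on.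
-/

theorem eq_of_le_of_succ_eq {α : Type*} {s : ℕ → α} (f : α → α)
    (hs : ∀ k, s (k + 1) = f (s k)) {n : ℕ} (hn : s (n + 1) = s n) :
    ∀ k, n ≤ k → s k = s n := by
  intro k hk
  induction k, hk using Nat.le_induction with
  | base => rfl
  | succ k _ ih => rw [hs, ih, ← hs, hn]

lemma αH_mulVec (x : Fin 3 → ℝ) (v : Fin 4 → ℝ) :
    αH x *ᵥ v = ![x 0 * v 1, x 0 * v 0,
      x 1 * v 0 - x 1 * v 1 - x 0 * v 2,
      x 2 * v 0 + x 2 * v 1 - x 0 * v 2 + x 0 * v 3] := by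
  ext i
  fin_cases i <;> simp [αH, mulVec, dotProduct, Fin.sum_univ_four] <;> ring

lemma κH_mulVec (x y : Fin 3 → ℝ) (v : Fin 4 → ℝ) :
    κH x y *ᵥ v = Pi.single 3 (2 * (x 0 * y 1 - x 1 * y 0) * v 1) := by
  ext i
  fin_cases i <;> simp [κH, mulVec, dotProduct, Matrix.single]

lemma S14_zero : S14 0 = {v | v 1 = 0} := by
  ext v
  simp only [S14, κH_mulVec, Pi.single_eq_zero_iff, Set.mem_ofPred_eq]
  constructor
  · intro h
    simpa using h ![1, 0, 0] ![0, 1, 0]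
  · intro h x y
    simp [h]

lemma S14_succ (k : ℕ) :
    S14 (k + 1) = {v | v ∈ S14 k ∧ ∀ x : Fin 3 → ℝ, αH x *ᵥ v ∈ S14 k} := by
  rw [S14]

lemma S14_one : S14 1 = {v | v 0 = 0 ∧ v 1 = 0} := by
  ext v
  simp only [S14_succ, S14_zero, αH_mulVec, Set.mem_ofPred_eq, Matrix.cons_val_one,
    Matrix.cons_val_zero]
  constructor
  · rintro ⟨hv1, hαv⟩
    exact ⟨by simpa using hαv ![1, 0, 0], hv1⟩
  · rintro ⟨hv0, hv1⟩
    exact ⟨hv1, fun x => by simp [hv0]⟩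

lemma S14_two : S14 2 = S14 1 := by
  ext v
  simp only [S14_succ 1, S14_one, αH_mulVec, Set.mem_ofPred_eq]
  constructor
  · exact And.left
  · rintro ⟨hv0, hv1⟩
    exact ⟨⟨hv0, hv1⟩, fun x => by simp [hv0, hv1]⟩

theorem stmt14 :
    S14 0 = {v | v 1 = 0} ∧
    S14 1 = {v | v 0 = 0 ∧ v 1 = 0} ∧
    (∀ k : ℕ, 1 ≤ k → S14 k = S14 1) :=
  ⟨S14_zero, S14_one,
    eq_of_le_of_succ_eq (fun T => {v | v ∈ T ∧ ∀ x, αH x *ᵥ v ∈ T}) S14_succ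
      S14_two⟩
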